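/- Let A = {0, 1, …, m} with m ≥ 1, so |A| = m + 1, let n ≥ 7, and let u = m · (m−1) · m^{n−2} (a word of length n). Then the number of Nyldon words x over A with |x| ≤ 2n + 1 and x >_lex u equals (|A|^{n+2} − |A|)/(|A| − 1) − (|A|³ + |A|² + 2|A| + 2). -/

import Mathlib

/-!
Common definitions: words over a totally ordered alphabet, lexicographic order,
Nyldon and Lyndon words, Nyldon-like sets, right Hall sets, and (circular) codes.
-/

/-- Strict lexicographic order on words: `u <_lex v` iff `u` is a proper prefix of `v`,
or `u` and `v` first differ at a position where `u` has the smaller letter. -/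
def LexLt {A : Type*} [LinearOrder A] (u v : List A) : Prop :=
  List.Lex (· < ·) u v

/-- Nonstrict lexicographic order on words. -/
def LexLe {A : Type*} [LinearOrder A] (u v : List A) : Prop :=
  u = v ∨ LexLt u v

theorem length_le_length_flatten_of_ne_nil {A : Type*} {s : List (List A)}
    (h : ∀ g ∈ s, g ≠ []) : s.length ≤ s.flatten.length := by
  induction s with
  | nil => simp
  | cons a t ih =>
    simp only [List.flatten_cons, List.length_append, List.length_cons]
    have ha : 1 ≤ a.length := List.length_pos_iff.mpr (h a (by simp))
    have ht := ih (fun g hg => h g (List.mem_cons_of_mem _ hg))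
    omega

theorem length_lt_length_flatten {A : Type*} {f : List A} {fs : List (List A)}
    (h2 : 2 ≤ fs.length) (hne : ∀ g ∈ fs, g ≠ []) (hf : f ∈ fs) :
    f.length < fs.flatten.length := by
  obtain ⟨s, t, rfl⟩ := List.append_of_mem hf
  have hs : s.length ≤ s.flatten.length :=
    length_le_length_flatten_of_ne_nil (fun g hg => hne g (by simp [hg]))
  have ht : t.length ≤ t.flatten.length :=
    length_le_length_flatten_of_ne_nil (fun g hg => hne g (by simp [hg]))
  have hlen : 2 ≤ s.length + t.length + 1 := by
    simp only [List.length_append, List.length_cons] at h2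
    omega
  have hj : (s ++ f :: t).flatten.length
      = s.flatten.length + f.length + t.flatten.length := by
    simp [List.flatten_append]
    omega
  omega

/-- A nonempty word is Nyldon if it admits no factorization into at least two
lexicographically nondecreasing Nyldon words. (Single letters are Nyldon vacuously,
since they admit no factorization into at least two nonempty words at all.) -/
def IsNyldon {A : Type*} [LinearOrder A] (w : List A) : Prop :=
  w ≠ [] ∧ ∀ fs : List (List A), 2 ≤ fs.length → (∀ g ∈ fs, g ≠ []) →
    fs.flatten = w → (∀ f ∈ fs, IsNyldon f) → fs.Chain' LexLe → False
termination_by w.length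
decreasing_by
  rename_i h2 hne hjoin hf
  subst hjoin
  exact length_lt_length_flatten h2 hne hf

/-- A nonempty word is Lyndon if it admits no factorization into at least two
lexicographically nonincreasing Lyndon words. -/
def IsLyndon {A : Type*} [LinearOrder A] (w : List A) : Prop :=
  w ≠ [] ∧ ∀ fs : List (List A), 2 ≤ fs.length → (∀ g ∈ fs, g ≠ []) →
    fs.flatten = w → (∀ f ∈ fs, IsLyndon f) →
    fs.Chain' (fun u v => LexLe v u) → False
termination_by w.length
decreasing_by
  rename_i h2 hne hjoin hf
  subst hjoin
  exact length_lt_length_flatten h2 hne hf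

/-- `fs` is a Nyldon factorization of `w`: a nondecreasing (under `≤_lex`) sequence
of Nyldon words whose concatenation is `w`. -/
def IsNyldonFactorization {A : Type*} [LinearOrder A] (fs : List (List A)) (w : List A) :
    Prop :=
  (∀ f ∈ fs, IsNyldon f) ∧ fs.Chain' LexLe ∧ fs.flatten = w

/-- The `j`-th power `u^j` of a word `u`: the concatenation of `j` copies of `u`. -/
def wordPow {A : Type*} (u : List A) (j : ℕ) : List A :=
  (List.replicate j u).flatten

/-- A word is primitive if it is not a power `u^j` of a word `u` with `j ≥ 2`. -/
def Primitive {A : Type*} (w : List A) : Prop :=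
  ∀ (u : List A) (j : ℕ), 2 ≤ j → w ≠ wordPow u j

/-- A Nyldon-like set over the alphabet `A`: a set `Mem` of nonempty words together with a
strict total order `lt` on it, such that every single letter is in the set, a word of length
at least `2` is in the set iff it admits no factorization into at least two nondecreasing
words of the set, and `f ≺ fg` whenever `f`, `g`, `fg` are all in the set. -/
structure NyldonLike (A : Type*) where
  /-- membership in `G` -/
  Mem : List A → Prop
  /-- the strict total order `≺` on `G` -/
  lt : List A → List A → Prop
  mem_ne_nil : ∀ w, Mem w → w ≠ []
  lt_irrefl : ∀ u, Mem u → ¬ lt u u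
  lt_trans : ∀ u v x, Mem u → Mem v → Mem x → lt u v → lt v x → lt u x
  lt_total : ∀ u v, Mem u → Mem v → lt u v ∨ u = v ∨ lt v u
  singleton_mem : ∀ a : A, Mem [a]
  mem_iff : ∀ w : List A, 2 ≤ w.length →
    (Mem w ↔ ¬ ∃ fs : List (List A), 2 ≤ fs.length ∧ (∀ f ∈ fs, Mem f) ∧
      fs.Chain' (fun u v => u = v ∨ lt u v) ∧ fs.flatten = w)
  append_lt : ∀ f g, Mem f → Mem g → Mem (f ++ g) → lt f (f ++ g)

namespace NyldonLike

variable {A : Type*}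

/-- The nonstrict order `⪯` associated to a Nyldon-like set. -/
def le (G : NyldonLike A) (u v : List A) : Prop :=
  u = v ∨ G.lt u v

/-- `fs` is a `G`-factorization of `w`: a nondecreasing (under `⪯`) sequence of
`G`-words whose concatenation is `w`. -/
def IsFactorization (G : NyldonLike A) (fs : List (List A)) (w : List A) : Prop :=
  (∀ f ∈ fs, G.Mem f) ∧ fs.Chain' G.le ∧ fs.flatten = w

end NyldonLike

/-- A factorization `fs` of a word written as the concatenation of `blocks` preserves the
blocks if each factor is the concatenation of a (nonempty) consecutive run of whole blocks. -/
def PreservesBlocks {A : Type*} (blocks fs : List (List A)) : Prop :=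
  ∃ P : List (List (List A)), (∀ p ∈ P, p ≠ []) ∧ P.flatten = blocks ∧
    P.map List.flatten = fs

/-- A right Hall set over the alphabet `A`: a set `Mem` of nonempty words with a strict
total order `lt` such that every nonempty word has a unique nondecreasing factorization
into words of the set, and `fg ≻ g` whenever `f`, `g`, `fg` are all in the set. -/
structure RightHallSet (A : Type*) where
  /-- membership in `H` -/
  Mem : List A → Prop
  /-- the strict total order `≺` on `H` -/
  lt : List A → List A → Prop
  mem_ne_nil : ∀ w, Mem w → w ≠ []
  lt_irrefl : ∀ u, Mem u → ¬ lt u u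
  lt_trans : ∀ u v x, Mem u → Mem v → Mem x → lt u v → lt v x → lt u x
  lt_total : ∀ u v, Mem u → Mem v → lt u v ∨ u = v ∨ lt v u
  unique_factorization : ∀ w : List A, w ≠ [] →
    ∃! fs : List (List A), (∀ f ∈ fs, Mem f) ∧
      fs.Chain' (fun u v => u = v ∨ lt u v) ∧ fs.flatten = w
  append_gt : ∀ f g, Mem f → Mem g → Mem (f ++ g) → lt g (f ++ g)

/-- A set `F` of words is a code if any two sequences of words of `F` with equal
concatenations are equal. -/
def IsCode {A : Type*} (F : List A → Prop) : Prop :=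
  ∀ l₁ l₂ : List (List A), (∀ f ∈ l₁, F f) → (∀ f ∈ l₂, F f) →
    l₁.flatten = l₂.flatten → l₁ = l₂

/-- `w ∈ F*`: `w` is a concatenation of (zero or more) words of `F`. -/
def CodeStar {A : Type*} (F : List A → Prop) (w : List A) : Prop :=
  ∃ l : List (List A), (∀ f ∈ l, F f) ∧ l.flatten = w

/-- A set `F` of words is a circular code if it is a code and whenever
`uv ∈ F*` and `vu ∈ F*`, also `u ∈ F*` and `v ∈ F*`. -/
def IsCircularCode {A : Type*} (F : List A → Prop) : Prop :=
  IsCode F ∧ ∀ u v : List A, CodeStar F (u ++ v) → CodeStar F (v ++ u) → CodeStar F u ∧ CodeStar F v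

/-!
Write `⊤` for the largest letter and `b` for the letter just below it, and
`u_j = ⊤ b ⊤^j`. A Nyldon word of length at least two starts with a strict descent, since
`a c w` with `a ≤ c` factors as `[a]` followed by a Nyldon factorization of `c w`. Hence a
Nyldon word `x >_lex u_j` is `u_j s` with `s` nonempty, and in a Nyldon factorization
`f₁ ≤ f₂ ≤ ⋯` of a non-Nyldon word `u_j s` the factor `f₂` must again begin with `⊤ b`.
Locating that occurrence of `⊤ b` inside `u_j s` shows that, for `|s| ≤ j + 3`, the word
`u_j s` fails to be Nyldon exactly when it is `u_{j-1} u_{j-1} t` with `|t| ≤ 3` or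
`u_j u_j r` with `|r| ≤ 1`. Counting the remaining words `s` of length `1, …, j + 3` gives the
formula, with `n = j + 2`.
-/

open List

section Lex

variable {A : Type*} [LinearOrder A]

theorem lexLe_cons_cons_iff {a c : A} {l₁ l₂ : List A} :
    LexLe (a :: l₁) (c :: l₂) ↔ a < c ∨ a = c ∧ LexLe l₁ l₂ := by
  simp only [LexLe, LexLt, List.cons_lex_cons_iff, List.cons.injEq]
  tauto

theorem lexLe_nil_iff {l : List A} : LexLe l [] ↔ l = [] := by
  simp [LexLe, LexLt]

theorem lexLe_append_right (v t : List A) : LexLe v (v ++ t) := by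
  induction v with
  | nil => cases t <;> simp [LexLe, LexLt]
  | cons a v ih => exact lexLe_cons_cons_iff.mpr (Or.inr ⟨rfl, ih⟩)

theorem lexLe_replicate_top_append [OrderTop A] {k : ℕ} {x y : List A}
    (h : LexLe (replicate k ⊤ ++ x) y) : ∃ y', y = replicate k ⊤ ++ y' ∧ LexLe x y' := by
  induction k generalizing y with
  | zero => exact ⟨y, rfl, h⟩
  | succ k ih =>
    obtain _ | ⟨c, y⟩ := y
    · simp [lexLe_nil_iff] at h
    rw [replicate_succ, cons_append, lexLe_cons_cons_iff] at h
    obtain h | ⟨rfl, h⟩ := h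
    · exact absurd h not_top_lt
    · obtain ⟨y', rfl, hy'⟩ := ih h
      exact ⟨y', rfl, hy'⟩

end Lex

section Nyldon

variable {A : Type*} [LinearOrder A]

theorem IsNyldon.ne_nil {w : List A} (h : IsNyldon w) : w ≠ [] := by
  rw [IsNyldon] at h
  exact h.1

theorem isNyldon_singleton (a : A) : IsNyldon [a] := by
  rw [IsNyldon]
  refine ⟨cons_ne_nil _ _, fun fs h2 hne hfs _ _ => ?_⟩
  have := hfs ▸ length_le_length_flatten_of_ne_nil hne
  simp at this
  omega

theorem not_isNyldon_iff {w : List A} :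
    ¬ IsNyldon w ↔ w = [] ∨ ∃ fs, 2 ≤ fs.length ∧ IsNyldonFactorization fs w := by
  rw [IsNyldon]
  constructor
  · intro h
    by_cases hw : w = []
    · exact Or.inl hw
    simp only [not_and, not_forall, not_false_eq_true, exists_prop] at h
    obtain ⟨fs, h2, -, hfs, hnyl, hchain, -⟩ := h hw
    exact Or.inr ⟨fs, h2, hnyl, hchain, hfs⟩
  · rintro (rfl | ⟨fs, h2, hnyl, hchain, rfl⟩) ⟨hw, hfs⟩
    · exact hw rfl
    · exact hfs fs h2 (fun g hg => (hnyl g hg).ne_nil) rfl hnyl hchain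

theorem exists_isNyldonFactorization (w : List A) : ∃ fs, IsNyldonFactorization fs w := by
  by_cases h : IsNyldon w
  · exact ⟨[w], by simpa using h, isChain_singleton w, by simp⟩
  rcases not_isNyldon_iff.mp h with rfl | ⟨fs, -, hfs⟩
  · exact ⟨[], by simp, IsChain.nil, rfl⟩
  · exact ⟨fs, hfs⟩

theorem exists_of_not_isNyldon {w : List A} (hw : w ≠ []) (h : ¬ IsNyldon w) :
    ∃ f₁ f₂ X, w = f₁ ++ f₂ ++ X ∧ IsNyldon f₁ ∧ IsNyldon f₂ ∧ LexLe f₁ f₂ := by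
  obtain ⟨fs, h2, hnyl, hchain, rfl⟩ := (not_isNyldon_iff.mp h).resolve_left hw
  obtain _ | ⟨f₁, _ | ⟨f₂, X⟩⟩ := fs
  · simp at h2
  · simp at h2
  · refine ⟨f₁, f₂, X.flatten, by simp, hnyl _ (by simp), hnyl _ (by simp), ?_⟩
    exact (isChain_cons_cons.mp hchain).1

theorem IsNyldonFactorization.cons {fs : List (List A)} {w f : List A}
    (h : IsNyldonFactorization fs w) (hf : IsNyldon f) (hle : ∀ g ∈ fs.head?, LexLe f g) :
    IsNyldonFactorization (f :: fs) (f ++ w) := by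
  obtain ⟨hnyl, hchain, rfl⟩ := h
  refine ⟨forall_mem_cons.mpr ⟨hf, hnyl⟩, isChain_cons.mpr ⟨hle, hchain⟩, rfl⟩

theorem not_isNyldon_cons_cons {a c : A} (h : a ≤ c) (w : List A) :
    ¬ IsNyldon (a :: c :: w) := by
  obtain ⟨fs, hfs⟩ := exists_isNyldonFactorization (c :: w)
  obtain _ | ⟨g, gs⟩ := fs
  · simp [IsNyldonFactorization] at hfs
  have hg : g ≠ [] := (hfs.1 g (by simp)).ne_nil
  obtain ⟨d, g', rfl⟩ := exists_cons_of_ne_nil hg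
  have hd : d = c := by
    have := hfs.2.2
    simp only [flatten_cons, cons_append, cons.injEq] at this
    exact this.1
  subst hd
  have hle : LexLe [a] (d :: g') := by
    rcases h.lt_or_eq with h | rfl
    · exact lexLe_cons_cons_iff.mpr (Or.inl h)
    · exact lexLe_append_right [a] g'
  exact not_isNyldon_iff.mpr <|
    Or.inr ⟨_, by simp, hfs.cons (isNyldon_singleton a) (by simpa using hle)⟩

theorem not_isNyldon_append {v w : List A} (hv : IsNyldon v) (hw : IsNyldon w)
    (hle : LexLe v w) : ¬ IsNyldon (v ++ w) :=
  not_isNyldon_iff.mpr <| Or.inr ⟨[v, w], by simp, by simp [hv, hw], isChain_pair.mpr hle, by simp⟩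

end Nyldon

section TopWord

variable {A : Type*} [LinearOrder A] [OrderTop A] {b : A}

/-- With `b = m - 1` over `{0, …, m}` and `j = n - 2` this is the word `u` of the theorem. -/
def wordU (b : A) (j : ℕ) : List A := ⊤ :: b :: replicate j ⊤

theorem length_wordU (b : A) (j : ℕ) : (wordU b j).length = j + 2 := by
  simp [wordU]

theorem exists_eq_top_cons_of_lexLe (hb : b ⋖ ⊤) {p f : List A} (hf : IsNyldon f)
    (h : LexLe (⊤ :: b :: p) f) : ∃ q, f = ⊤ :: b :: q ∧ LexLe p q := by
  obtain _ | ⟨c, _ | ⟨d, q⟩⟩ := f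
  · exact absurd rfl hf.ne_nil
  · simp [lexLe_cons_cons_iff, lexLe_nil_iff] at h
  rw [lexLe_cons_cons_iff, lexLe_cons_cons_iff] at h
  obtain h | ⟨rfl, h | ⟨rfl, h⟩⟩ := h
  · exact absurd h not_top_lt
  · exact absurd hf (not_isNyldon_cons_cons ((hb.eq_or_eq h.le le_top).resolve_left h.ne').ge q)
  · exact ⟨q, rfl, h⟩

/-- `⊤ b p` and `⊤ b q` are the first two factors of a Nyldon factorization of `⊤ b v`. -/
theorem exists_of_not_isNyldon_top_cons (hb : b ⋖ ⊤) {v : List A}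
    (h : ¬ IsNyldon (⊤ :: b :: v)) :
    ∃ p q X, v = p ++ (⊤ :: b :: q) ++ X ∧ LexLe p q := by
  obtain ⟨f₁, f₂, X, hv, hf₁, hf₂, hle⟩ := exists_of_not_isNyldon (cons_ne_nil _ _) h
  obtain _ | ⟨c, _ | ⟨d, p⟩⟩ := f₁
  · exact absurd rfl hf₁.ne_nil
  · obtain _ | ⟨e, f₂'⟩ := f₂
    · exact absurd rfl hf₂.ne_nil
    simp only [cons_append, nil_append, cons.injEq] at hv
    obtain ⟨rfl, rfl, -⟩ := hv
    rcases lexLe_cons_cons_iff.mp hle with h | ⟨h, -⟩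
    · exact absurd h not_top_lt
    · exact absurd h hb.lt.ne'
  · simp only [cons_append, cons.injEq] at hv
    obtain ⟨rfl, rfl, rfl⟩ := hv
    obtain ⟨q, rfl, hpq⟩ := exists_eq_top_cons_of_lexLe hb hf₂ hle
    exact ⟨p, q, X, by simp, hpq⟩

theorem append_top_cons_eq_replicate_append (hb : b ≠ ⊤) {j : ℕ} {p R s : List A}
    (h : p ++ ⊤ :: b :: R = replicate j ⊤ ++ s) :
    (p = replicate (j - 1) ⊤ ∧ s = b :: R) ∨
      ∃ c, p = replicate j ⊤ ++ c ∧ s = c ++ ⊤ :: b :: R := by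
  induction j generalizing p with
  | zero => exact Or.inr ⟨p, rfl, h.symm⟩
  | succ j ih =>
    obtain _ | ⟨c, p⟩ := p
    · obtain _ | j := j
      · simp only [nil_append, zero_add, replicate_one, singleton_append, cons.injEq] at h
        exact Or.inl ⟨rfl, h.2.symm⟩
      · simp only [nil_append, replicate_succ, cons_append, cons.injEq] at h
        exact absurd h.2.1 hb
    · simp only [cons_append, replicate_succ, cons.injEq] at h
      obtain ⟨rfl, h⟩ := h
      rcases ih h with ⟨rfl, rfl⟩ | ⟨c, rfl, rfl⟩
      · obtain _ | j := j
        · simp at h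
        · exact Or.inl ⟨rfl, rfl⟩
      · exact Or.inr ⟨c, rfl, rfl⟩

theorem eq_of_not_isNyldon_wordU_append (hb : b ⋖ ⊤) {j : ℕ} {s : List A}
    (hs : s.length ≤ j + 3) (h : ¬ IsNyldon (wordU b j ++ s)) :
    (∃ t, b :: (replicate (j - 1) ⊤ ++ t) = s) ∨ ∃ r, r.length ≤ 1 ∧ wordU b j ++ r = s := by
  obtain ⟨p, q, X, hv, hpq⟩ := exists_of_not_isNyldon_top_cons hb h
  rw [append_assoc, cons_append, cons_append, eq_comm] at hv
  rcases append_top_cons_eq_replicate_append hb.lt.ne hv with ⟨rfl, rfl⟩ | ⟨c, rfl, rfl⟩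
  · obtain ⟨q', rfl, -⟩ := lexLe_replicate_top_append (x := []) (by simpa using hpq)
    exact Or.inl ⟨q' ++ X, by simp⟩
  · obtain ⟨q', rfl, hcq⟩ := lexLe_replicate_top_append hpq
    have hlen : c.length + q'.length + X.length ≤ 1 := by
      simp only [length_append, length_cons, length_replicate] at hs
      omega
    obtain rfl : c = [] := by
      obtain _ | ⟨e, c⟩ := c
      · rfl
      · obtain rfl : q' = [] := by simp at hlen; exact eq_nil_of_length_eq_zero (by omega)
        simp [lexLe_nil_iff] at hcq
    refine Or.inr ⟨q' ++ X, by simpa using hlen, by simp [wordU]⟩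

theorem isNyldon_wordU_append (hb : b ⋖ ⊤) {j : ℕ} (hj : 4 ≤ j) {t : List A}
    (ht : t.length ≤ 3) : IsNyldon (wordU b j ++ t) := by
  by_contra h
  rcases eq_of_not_isNyldon_wordU_append hb (by omega) h with ⟨t', rfl⟩ | ⟨r, -, rfl⟩
  · simp at ht
    omega
  · simp [length_wordU] at ht
    omega

theorem not_isNyldon_wordU_append_wordU_append (hb : b ⋖ ⊤) {j : ℕ} (hj : 4 ≤ j)
    {t : List A} (ht : t.length ≤ 3) : ¬ IsNyldon (wordU b j ++ (wordU b j ++ t)) :=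
  not_isNyldon_append (by simpa using isNyldon_wordU_append hb hj (t := []) (by simp))
    (isNyldon_wordU_append hb hj ht) (lexLe_append_right _ _)

theorem not_isNyldon_wordU_append_iff (hb : b ⋖ ⊤) {j : ℕ} (hj : 5 ≤ j) {s : List A}
    (hs : s.length ≤ j + 3) :
    ¬ IsNyldon (wordU b j ++ s) ↔
      (∃ t, t.length < 4 ∧ b :: (replicate (j - 1) ⊤ ++ t) = s) ∨
        ∃ r, r.length < 2 ∧ wordU b j ++ r = s := by
  refine ⟨fun h => ?_, ?_⟩
  · rcases eq_of_not_isNyldon_wordU_append hb hs h with ⟨t, rfl⟩ | ⟨r, hr, rfl⟩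
    · refine Or.inl ⟨t, ?_, rfl⟩
      simp at hs
      omega
    · exact Or.inr ⟨r, by omega, rfl⟩
  · rintro (⟨t, ht, rfl⟩ | ⟨r, hr, rfl⟩)
    · obtain ⟨i, rfl⟩ : ∃ i, j = i + 1 := ⟨j - 1, by omega⟩
      convert not_isNyldon_wordU_append_wordU_append hb (by omega : 4 ≤ i) (by omega : t.length ≤ 3)
        using 1
      simp [wordU, replicate_succ']
    · exact not_isNyldon_wordU_append_wordU_append hb (by omega) (by omega)

theorem exists_eq_wordU_append_of_lexLt (hb : b ⋖ ⊤) {j : ℕ} {x : List A} (hx : IsNyldon x)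
    (h : LexLt (wordU b j) x) : ∃ s, s ≠ [] ∧ x = wordU b j ++ s := by
  obtain ⟨q, rfl, hq⟩ := exists_eq_top_cons_of_lexLe hb hx (Or.inr h)
  obtain ⟨s, rfl, -⟩ := lexLe_replicate_top_append (x := []) (by simpa using hq)
  refine ⟨s, ?_, by simp [wordU]⟩
  rintro rfl
  simp [wordU, LexLt] at h

end TopWord

section Count

open Finset

section Words

variable {A : Type*} [Fintype A] [DecidableEq A]

def wordsWithLengthIn (A : Type*) [Fintype A] [DecidableEq A] (s : Finset ℕ) : Finset (List A) :=
  s.biUnion fun k => univ.map ⟨List.Vector.toList (α := A) (n := k), List.Vector.toList_injective⟩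

theorem mem_wordsWithLengthIn {s : Finset ℕ} {w : List A} :
    w ∈ wordsWithLengthIn A s ↔ w.length ∈ s := by
  simp only [wordsWithLengthIn, mem_biUnion, Finset.mem_map, mem_univ, true_and,
    Function.Embedding.coeFn_mk]
  constructor
  · rintro ⟨k, hk, v, rfl⟩
    rwa [v.toList_length]
  · exact fun h => ⟨_, h, ⟨w, rfl⟩, rfl⟩

theorem card_wordsWithLengthIn (s : Finset ℕ) :
    #(wordsWithLengthIn A s) = ∑ k ∈ s, Fintype.card A ^ k := by
  rw [wordsWithLengthIn, card_biUnion]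
  · simp
  · intro i _ k _ hik
    simp only [Function.onFun, Finset.disjoint_left, Finset.mem_map, mem_univ, true_and,
      Function.Embedding.coeFn_mk]
    rintro w ⟨v, rfl⟩ ⟨v', hv'⟩
    exact hik (v.toList_length ▸ hv' ▸ v'.toList_length)

end Words

variable {A : Type*} [LinearOrder A] [OrderTop A] [Fintype A] {b : A}

/-- The words `s` of length at most `j + 3` for which `u_j s` is not Nyldon. -/
def nonNyldonTails (b : A) (j : ℕ) : Finset (List A) :=
  (wordsWithLengthIn A (range 4)).image (fun t => b :: (replicate (j - 1) ⊤ ++ t)) ∪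
    (wordsWithLengthIn A (range 2)).image (wordU b j ++ ·)

theorem mem_nonNyldonTails {j : ℕ} {s : List A} :
    s ∈ nonNyldonTails b j ↔ (∃ t, t.length < 4 ∧ b :: (replicate (j - 1) ⊤ ++ t) = s) ∨
      ∃ r, r.length < 2 ∧ wordU b j ++ r = s := by
  simp [nonNyldonTails, mem_wordsWithLengthIn]

theorem card_nonNyldonTails (hb : b ≠ ⊤) (j : ℕ) :
    #(nonNyldonTails b j) =
      ∑ k ∈ range 4, Fintype.card A ^ k + ∑ k ∈ range 2, Fintype.card A ^ k := by
  rw [nonNyldonTails, card_union_of_disjoint, card_image_of_injective, card_image_of_injective,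
    card_wordsWithLengthIn, card_wordsWithLengthIn]
  · exact List.append_right_injective _
  · intro t t' h
    simpa using h
  · simp only [Finset.disjoint_left, mem_image]
    rintro _ ⟨t, -, rfl⟩ ⟨r, -, h⟩
    simp only [wordU, cons_append, cons.injEq] at h
    exact hb h.1.symm

theorem nonNyldonTails_subset {j : ℕ} (hj : 1 ≤ j) :
    nonNyldonTails b j ⊆ wordsWithLengthIn A (Icc 1 (j + 3)) := by
  intro s hs
  simp only [mem_nonNyldonTails, mem_wordsWithLengthIn, mem_Icc] at hs ⊢
  rcases hs with ⟨t, ht, rfl⟩ | ⟨r, hr, rfl⟩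
  · simp
    omega
  · simp [length_wordU]
    omega

theorem setOf_isNyldon_lexLt_wordU_eq (hb : b ⋖ ⊤) {j : ℕ} (hj : 5 ≤ j) :
    {x : List A | IsNyldon x ∧ x.length ≤ 2 * j + 5 ∧ LexLt (wordU b j) x} =
      ((wordsWithLengthIn A (Icc 1 (j + 3)) \ nonNyldonTails b j).image (wordU b j ++ ·) :
        Set (List A)) := by
  ext x
  simp only [Set.mem_ofPred_eq, coe_image, Set.mem_image, mem_coe, mem_sdiff,
    mem_wordsWithLengthIn, mem_Icc]
  constructor
  · rintro ⟨hx, hlen, hlt⟩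
    obtain ⟨s, hs, rfl⟩ := exists_eq_wordU_append_of_lexLt hb hx hlt
    rw [length_append, length_wordU] at hlen
    refine ⟨s, ⟨⟨length_pos_iff.mpr hs, by omega⟩, ?_⟩, rfl⟩
    rw [mem_nonNyldonTails, ← not_isNyldon_wordU_append_iff hb hj (by omega)]
    exact not_not.mpr hx
  · rintro ⟨s, ⟨hlen, hs⟩, rfl⟩
    rw [mem_nonNyldonTails, ← not_isNyldon_wordU_append_iff hb hj (by omega), not_not] at hs
    refine ⟨hs, by simp [length_wordU]; omega, lexLe_append_right _ _ |>.resolve_left ?_⟩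
    simpa [eq_comm] using ne_nil_of_length_pos (by omega : 0 < s.length)

theorem ncard_setOf_isNyldon_lexLt_wordU (hb : b ⋖ ⊤) {j : ℕ} (hj : 5 ≤ j) :
    {x : List A | IsNyldon x ∧ x.length ≤ 2 * j + 5 ∧ LexLt (wordU b j) x}.ncard =
      ∑ k ∈ Icc 1 (j + 3), Fintype.card A ^ k -
        (∑ k ∈ range 4, Fintype.card A ^ k + ∑ k ∈ range 2, Fintype.card A ^ k) := by
  rw [setOf_isNyldon_lexLt_wordU_eq hb hj, Set.ncard_coe_finset,
    card_image_of_injective _ (List.append_right_injective _),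
    card_sdiff_of_subset (nonNyldonTails_subset (by omega)), card_wordsWithLengthIn,
    card_nonNyldonTails hb.lt.ne]

end Count

theorem sum_Icc_pow_mul (m N : ℕ) :
    (∑ k ∈ Finset.Icc 1 N, (m + 1) ^ k) * m = (m + 1) ^ (N + 1) - (m + 1) := by
  induction N with
  | zero => simp
  | succ N ih =>
    rw [Finset.sum_Icc_succ_top (by omega), add_mul, ih]
    have : m + 1 ≤ (m + 1) ^ (N + 1) := Nat.le_self_pow (by omega) _
    rw [pow_succ _ (N + 1)]
    zify [this, Nat.le_mul_of_pos_right _ (by omega : 0 < m + 1) |>.trans' this]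
    ring

/-- Over `A = {0, 1, …, m}` with `m ≥ 1` (so `|A| = m + 1`), for `n ≥ 7`
and `u = m (m-1) m^{n-2}` (of length `n`), the number of Nyldon words `x` with
`|x| ≤ 2n + 1` and `x >_lex u` is
`(|A|^(n+2) - |A|) / (|A| - 1) - (|A|^3 + |A|^2 + 2|A| + 2)`. -/
theorem stmt_18 (m n : ℕ) (hm : 1 ≤ m) (hn : 7 ≤ n) :
    {x : List (Fin (m + 1)) | IsNyldon x ∧ x.length ≤ 2 * n + 1 ∧
        LexLt (Fin.last m :: (⟨m - 1, by omega⟩ : Fin (m + 1)) ::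
          List.replicate (n - 2) (Fin.last m)) x}.ncard
      = ((m + 1) ^ (n + 2) - (m + 1)) / ((m + 1) - 1)
          - ((m + 1) ^ 3 + (m + 1) ^ 2 + 2 * (m + 1) + 2) := by
  have hb : (⟨m - 1, by omega⟩ : Fin (m + 1)) ⋖ ⊤ := by
    rw [Fin.top_eq_last, Fin.covBy_iff, Fin.val_last, Nat.covBy_iff_add_one_eq]
    exact Nat.sub_add_cancel hm
  have h := ncard_setOf_isNyldon_lexLt_wordU hb (j := n - 2) (by omega)
  rw [wordU, Fin.top_eq_last, Fintype.card_fin, show 2 * (n - 2) + 5 = 2 * n + 1 by omega,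
    show n - 2 + 3 = n + 1 by omega] at h
  rw [h, Nat.add_sub_cancel, Nat.div_eq_of_eq_mul_left (by omega) (sum_Icc_pow_mul m (n + 1)).symm]
  congr 1
  simp only [Finset.sum_range_succ, Finset.sum_range_zero]
  ring
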